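/- arXiv:2604.03930 — 3 statements merged into one kernel-verified Lean document; each statement's English description precedes it below -/
import Mathlib

section
/- Let R be a commutative ring, m ≥ 1, and c⃗ = (c₁,…,c_m) integers with each cᵢ ≥ 2. Let A⁺_{c⃗,R} be the R-subalgebra of ∏_{i=1}^m R[tᵢ]/(tᵢ^{cᵢ}) consisting of tuples with all constant terms equal, and let 𝔪 be its ideal of tuples with zero constant terms (so A⁺_{c⃗,R} = R·1 ⊕ 𝔪). If φ : A⁺_{c⃗,R} → A⁺_{c⃗,R} is an R-algebra endomorphism with φ(𝔪) ⊆ 𝔪, then φ is bijective if and only if the induced R-module endomorphism of 𝔪/𝔪² is bijective. -/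
/-!
`A⁺ = R·1 ⊕ 𝔪` carries the augmentation `A⁺ → R` (the common constant term) with kernel `𝔪`,
and `𝔪` is finitely generated and nilpotent. An endomorphism `φ` with `φ(𝔪) ⊆ 𝔪` preserves the
augmentation, so when `φ` is onto every element of `𝔪` has a preimage in `𝔪`, and the induced
map on `𝔪/𝔪²` is onto. Conversely, if `𝔪 ⊆ φ(𝔪) + 𝔪²` then `T = φ(A⁺) ∩ 𝔪` is closed under
products and `𝔪 ⊆ T + 𝔪ᵏ` improves to `𝔪 ⊆ T + 𝔪ᵏ⁺¹`; nilpotency gives `𝔪 ⊆ T`, so `φ` is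
onto. Injectivity comes for free in both directions: a surjective endomorphism of a finitely
generated module over a commutative ring is bijective.
-/

set_option synthInstance.maxHeartbeats 1000000
set_option maxHeartbeats 2000000
open Polynomial

/-- The truncated polynomial ring `k[X]/(X^c)`. -/
abbrev TruncP (k : Type*) [CommRing k] (c : ℕ) : Type _ :=
  Polynomial k ⧸ Ideal.span {(X : Polynomial k) ^ c}

/-- The ambient product algebra `∏ i, k[tᵢ]/(tᵢ^{cᵢ})`. -/
abbrev TruncPi (k : Type*) [CommRing k] {ι : Type*} (c : ι → ℕ) : Type _ :=
  ∀ i, TruncP k (c i)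

/-- The image of `X` in `TruncP k c`. -/
noncomputable def truncX (k : Type*) [CommRing k] (c : ℕ) : TruncP k c :=
  Ideal.Quotient.mk _ X

/-- The monomial `tᵢ^j` in `∏ i, k[tᵢ]/(tᵢ^{cᵢ})`. -/
noncomputable def tpow {k : Type*} [CommRing k] {ι : Type*} [DecidableEq ι]
    (c : ι → ℕ) (i : ι) (j : ℕ) : TruncPi k c :=
  Pi.single i (truncX k (c i) ^ j)

/-- The constant term of a truncated polynomial (evaluation at `0`), for `c ≥ 1`. -/
noncomputable def constTerm (k : Type*) [CommRing k] (c : ℕ) (hc : 1 ≤ c) :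
    TruncP k c →ₐ[k] k :=
  Ideal.Quotient.liftₐ _ (aeval (0 : k)) (by
    intro a ha
    rw [Ideal.mem_span_singleton] at ha
    obtain ⟨q, rfl⟩ := ha
    have h0 : (0 : k) ^ c = 0 := zero_pow (Nat.one_le_iff_ne_zero.mp hc)
    simp [h0])

/-- `A⁺`: the subalgebra of tuples with all constant terms equal. -/
noncomputable def Aplus (k : Type*) [CommRing k] {ι : Type*} (c : ι → ℕ)
    (hc : ∀ i, 1 ≤ c i) : Subalgebra k (TruncPi k c) :=
  ⨅ (i : ι) (j : ι),
    AlgHom.equalizer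
      ((constTerm k (c i) (hc i)).comp (Pi.evalAlgHom k (fun i => TruncP k (c i)) i))
      ((constTerm k (c j) (hc j)).comp (Pi.evalAlgHom k (fun i => TruncP k (c i)) j))

/-- `m_I`: the span of the monomials `tᵢ^j`, `i ∈ I`, `1 ≤ j ≤ cᵢ - 1`. -/
noncomputable def mPart (k : Type*) [CommRing k] {ι : Type*} [DecidableEq ι]
    (c : ι → ℕ) (I : Set ι) : Submodule k (TruncPi k c) :=
  Submodule.span k {x | ∃ i ∈ I, ∃ j, 1 ≤ j ∧ j < c i ∧ x = tpow c i j}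

/-- `𝔪^d`: the span of the monomials of degree at least `d`. -/
noncomputable def mPow (k : Type*) [CommRing k] {ι : Type*} [DecidableEq ι]
    (c : ι → ℕ) (d : ℕ) : Submodule k (TruncPi k c) :=
  Submodule.span k {x | ∃ i, ∃ j, d ≤ j ∧ 1 ≤ j ∧ j < c i ∧ x = tpow c i j}

/-- Componentwise projection onto the coordinates in `I` (the projection along `m_{Iᶜ}`). -/
noncomputable def projL (k : Type*) [CommRing k] {ι : Type*} [DecidableEq ι] (c : ι → ℕ)
    (I : Finset ι) : TruncPi k c →ₗ[k] TruncPi k c where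
  toFun x i := if i ∈ I then x i else 0
  map_add' x y := by funext i; by_cases h : i ∈ I <;> simp [h]
  map_smul' r x := by funext i; by_cases h : i ∈ I <;> simp [h]

/-- Scaling `t ↦ λ·t` on `k[t]/(t^c)`, as a `k`-algebra homomorphism. -/
noncomputable def scaleHom (k : Type*) [CommRing k] (c : ℕ) (lam : k) :
    TruncP k c →ₐ[k] TruncP k c :=
  Ideal.Quotient.liftₐ _ (aeval (lam • truncX k c)) (by
    intro a ha
    rw [Ideal.mem_span_singleton] at ha
    obtain ⟨q, rfl⟩ := ha
    have hx : truncX k c ^ c = 0 := by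
      show (Ideal.Quotient.mk (Ideal.span {(X : Polynomial k) ^ c}) X) ^ c = 0
      rw [← map_pow, Ideal.Quotient.eq_zero_iff_mem]
      exact Ideal.mem_span_singleton_self _
    simp [_root_.smul_pow, hx])

/-- The torus action `tᵢ ↦ λᵢ·tᵢ` on `∏ i, k[tᵢ]/(tᵢ^{cᵢ})`. -/
noncomputable def torusHom {k : Type*} [CommRing k] {ι : Type*} (c : ι → ℕ) (lam : ι → k) :
    TruncPi k c →ₐ[k] TruncPi k c :=
  Pi.algHom k _ fun i => (scaleHom k (c i) (lam i)).comp (Pi.evalAlgHom k _ i)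

/-- Restriction of a tuple to the coordinates satisfying `P`, as an algebra hom. -/
noncomputable def restrictAlg (k : Type*) [CommRing k] {ι : Type*} (c : ι → ℕ)
    (P : ι → Prop) : TruncPi k c →ₐ[k] TruncPi k (fun i : {i // P i} => c i.1) where
  toFun x i := x i.1
  map_one' := rfl
  map_mul' _ _ := rfl
  map_zero' := rfl
  map_add' _ _ := rfl
  commutes' _ := rfl

/-- The set `k·1 ⊕ {b + b' + φ(b')}` associated to a gluing datum. -/
def graphSet {k A : Type*} [CommRing k] [CommRing A] [Algebra k A]
    (bI bI' : Submodule k A) (φ : ↥bI' →ₗ[k] A) : Set A :=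
  {z | ∃ r : k, ∃ b ∈ bI, ∃ b' : ↥bI', z = r • (1 : A) + b + ↑b' + φ b'}

theorem Submodule.le_of_le_sup_mul_self_of_isNilpotent {R A : Type*} [CommSemiring R]
    [Semiring A] [Algebra R A] {N T : Submodule R A} (hTN : T ≤ N) (hTT : T * T ≤ T)
    (hN : N ≤ T ⊔ N * N) (hnil : IsNilpotent N) : N ≤ T := by
  obtain ⟨k, hk⟩ := hnil
  suffices h : ∀ k, N ≤ T ⊔ N ^ (k + 1) by
    simpa [pow_succ, hk] using h k
  intro k
  induction k with
  | zero => simp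
  | succ k ih =>
    have hTN' : T * N ≤ T ⊔ N ^ (k + 2) :=
      calc T * N ≤ T * (T ⊔ N ^ (k + 1)) := mul_le_mul_right ih T
        _ = T * T ⊔ T * N ^ (k + 1) := Submodule.mul_sup _ _ _
        _ ≤ T ⊔ N ^ (k + 2) := by
          rw [pow_succ' N (k + 1)]
          exact sup_le_sup hTT (mul_le_mul_left hTN _)
    calc N ≤ T ⊔ N * N := hN
      _ ≤ T ⊔ (T ⊔ N ^ (k + 1)) * N := sup_le_sup_left (mul_le_mul_left ih N) T
      _ = T ⊔ (T * N ⊔ N ^ (k + 2)) := by rw [Submodule.sup_mul, ← pow_succ]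
      _ ≤ T ⊔ N ^ (k + 2) := sup_le le_sup_left (sup_le hTN' le_sup_right)

section Augmented

variable {R B : Type*} [CommRing R] [CommRing B] [Algebra R B] {A : Subalgebra R B}
  {M : Submodule R B} {ε : A →ₐ[R] R}

theorem sub_smul_one_mem_of_augmentation (hM : ∀ x : A, (x : B) ∈ M ↔ ε x = 0) (x : A) :
    (x : B) - ε x • 1 ∈ M := by
  simpa [Algebra.algebraMap_eq_smul_one] using (hM (x - algebraMap R A (ε x))).2 (by simp)

theorem mul_le_self_of_augmentation (hMA : M ≤ Subalgebra.toSubmodule A)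
    (hM : ∀ x : A, (x : B) ∈ M ↔ ε x = 0) : M * M ≤ M :=
  Submodule.mul_le.2 fun x hx y hy =>
    (hM (⟨x, hMA hx⟩ * ⟨y, hMA hy⟩)).2 (by simp [map_mul, (hM ⟨x, hMA hx⟩).1 hx])

theorem augmentation_apply_of_mapsTo (hM : ∀ x : A, (x : B) ∈ M ↔ ε x = 0)
    {φ : A →ₐ[R] A} (hφ : ∀ x : A, (x : B) ∈ M → (φ x : B) ∈ M) (x : A) : ε (φ x) = ε x := by
  have hx0 : ε (x - algebraMap R A (ε x)) = 0 := by simp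
  have hφx0 := (hM _).1 (hφ _ ((hM _).2 hx0))
  simpa [sub_eq_zero] using hφx0

theorem finite_of_augmentation (hMA : M ≤ Subalgebra.toSubmodule A)
    (hM : ∀ x : A, (x : B) ∈ M ↔ ε x = 0) (hfg : M.FG) : Module.Finite R A := by
  have hA : Subalgebra.toSubmodule A = Submodule.span R {1} ⊔ M := by
    refine le_antisymm (fun x hx => ?_) (sup_le ?_ hMA)
    · exact Submodule.mem_sup.2
        ⟨_, Submodule.smul_mem _ _ (Submodule.mem_span_singleton_self 1), _,
          sub_smul_one_mem_of_augmentation hM ⟨x, hx⟩, add_sub_cancel _ _⟩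
    · rw [Submodule.span_le, Set.singleton_subset_iff]
      exact A.one_mem
  have : Module.Finite R (Subalgebra.toSubmodule A) :=
    Module.Finite.iff_fg.2 (hA ▸ (Submodule.fg_span_singleton 1).sup hfg)
  exact Module.Finite.equiv (Subalgebra.toSubmoduleEquiv A)

variable {φ : A →ₐ[R] A} {Q : Type*} [AddCommGroup Q] [Module R Q] {q : M →ₗ[R] Q}
  {ψ : Q →ₗ[R] Q}

theorem surjective_cotangent_of_surjective (hMA : M ≤ Subalgebra.toSubmodule A)
    (hM : ∀ x : A, (x : B) ∈ M ↔ ε x = 0) (hφ : ∀ x : A, (x : B) ∈ M → (φ x : B) ∈ M)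
    (hψ : ∀ (x : A) (hx : (x : B) ∈ M), ψ (q ⟨x, hx⟩) = q ⟨φ x, hφ x hx⟩)
    (hq : Function.Surjective q) (hsurj : Function.Surjective φ) : Function.Surjective ψ := by
  intro y
  obtain ⟨⟨b, hb⟩, rfl⟩ := hq y
  obtain ⟨a, ha⟩ := hsurj ⟨b, hMA hb⟩
  have haM : (a : B) ∈ M := by
    rw [hM, ← augmentation_apply_of_mapsTo hM hφ, ha, ← hM]
    exact hb
  refine ⟨q ⟨a, haM⟩, ?_⟩
  rw [hψ]
  simp only [ha]

theorem surjective_of_surjective_cotangent (hMA : M ≤ Subalgebra.toSubmodule A)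
    (hM : ∀ x : A, (x : B) ∈ M ↔ ε x = 0) (hnil : IsNilpotent M)
    (hφ : ∀ x : A, (x : B) ∈ M → (φ x : B) ∈ M)
    (hψ : ∀ (x : A) (hx : (x : B) ∈ M), ψ (q ⟨x, hx⟩) = q ⟨φ x, hφ x hx⟩)
    (hq : Function.Surjective q) (hq_ker : LinearMap.ker q = Submodule.comap M.subtype (M * M))
    (hsurj : Function.Surjective ψ) : Function.Surjective φ := by
  set T := Subalgebra.toSubmodule (A.val.comp φ).range ⊓ M
  have hMT : M ≤ T := by
    refine Submodule.le_of_le_sup_mul_self_of_isNilpotent inf_le_right ?_ ?_ hnil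
    · exact Submodule.mul_le.2 fun x hx y hy => ⟨Subalgebra.mul_mem _ hx.1 hy.1,
        mul_le_self_of_augmentation hMA hM (Submodule.mul_mem_mul hx.2 hy.2)⟩
    · intro b hb
      obtain ⟨y, hy⟩ := hsurj (q ⟨b, hb⟩)
      obtain ⟨⟨a, haM⟩, rfl⟩ := hq y
      have hker : (⟨b, hb⟩ - ⟨φ ⟨a, hMA haM⟩, hφ _ haM⟩ : M) ∈ LinearMap.ker q := by
        rw [LinearMap.mem_ker, map_sub, ← hψ ⟨a, hMA haM⟩ haM, hy, sub_self]
      rw [hq_ker] at hker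
      exact Submodule.mem_sup.2 ⟨_, ⟨⟨_, rfl⟩, hφ _ haM⟩, _, hker, add_sub_cancel _ _⟩
  intro x
  obtain ⟨⟨a, ha⟩, -⟩ := hMT (sub_smul_one_mem_of_augmentation hM x)
  refine ⟨algebraMap R A (ε x) + a, Subtype.ext ?_⟩
  have ha' : (φ a : B) = x - ε x • 1 := ha
  rw [map_add, AlgHom.commutes, Subalgebra.coe_add, ha', Subalgebra.coe_algebraMap,
    Algebra.algebraMap_eq_smul_one, add_sub_cancel]

end Augmented

section Truncated

variable {R : Type*} [CommRing R]

theorem truncX_pow_eq_zero {c j : ℕ} (h : c ≤ j) : truncX R c ^ j = 0 := by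
  rw [truncX, ← map_pow, Ideal.Quotient.eq_zero_iff_mem, Ideal.mem_span_singleton]
  exact pow_dvd_pow X h

theorem span_truncX_pow_self (c : ℕ) : Ideal.span {truncX R c} ^ c = ⊥ := by
  rw [Ideal.span_singleton_pow, truncX_pow_eq_zero le_rfl, Ideal.span_singleton_eq_bot]

theorem constTerm_mk {c : ℕ} (hc : 1 ≤ c) (p : R[X]) :
    constTerm R c hc (Ideal.Quotient.mk _ p) = p.coeff 0 :=
  (coeff_zero_eq_aeval_zero p).symm

theorem constTerm_truncX {c : ℕ} (hc : 1 ≤ c) : constTerm R c hc (truncX R c) = 0 := by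
  rw [truncX, constTerm_mk, coeff_X_zero]

theorem sub_constTerm_smul_one_mem_span {c : ℕ} (hc : 1 ≤ c) (y : TruncP R c) :
    y - constTerm R c hc y • 1 ∈
      Submodule.span R {z | ∃ j, 1 ≤ j ∧ j < c ∧ z = truncX R c ^ j} := by
  obtain ⟨p, rfl⟩ := Ideal.Quotient.mk_surjective y
  induction p using Polynomial.induction_on' with
  | add p p' hp hp' =>
    simpa only [map_add, add_smul, add_sub_add_comm] using add_mem hp hp'
  | monomial j a =>
    have hmk : Ideal.Quotient.mk _ (monomial j a) = a • truncX R c ^ j := by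
      rw [← smul_X_eq_monomial, ← Ideal.Quotient.mkₐ_eq_mk R, map_smul, map_pow]
      rfl
    rw [constTerm_mk, coeff_monomial, hmk]
    obtain rfl | hj := eq_or_ne j 0
    · simp
    rw [if_neg hj, zero_smul, sub_zero]
    obtain hjc | hjc := lt_or_ge j c
    · exact Submodule.smul_mem _ a
        (Submodule.subset_span ⟨j, Nat.one_le_iff_ne_zero.2 hj, hjc, rfl⟩)
    · simp [truncX_pow_eq_zero hjc]

end Truncated

section Monomials

variable {R : Type*} [CommRing R] {ι : Type*} {c : ι → ℕ}

theorem mem_Aplus_iff (hc : ∀ i, 1 ≤ c i) {x : TruncPi R c} :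
    x ∈ Aplus R c hc ↔
      ∀ i j, constTerm R (c i) (hc i) (x i) = constTerm R (c j) (hc j) (x j) := by
  simp only [Aplus, Algebra.mem_iInf, AlgHom.mem_equalizer, AlgHom.coe_comp,
    Function.comp_apply, Pi.evalAlgHom_apply]

variable [DecidableEq ι]

theorem mPart_fg [Finite ι] (S : Set ι) : (mPart R c S).FG := by
  refine Submodule.fg_span ((Set.finite_iUnion fun i => Set.finite_range
    fun j : Fin (c i) => tpow (k := R) c i j).subset ?_)
  rintro _ ⟨i, -, j, -, hjc, rfl⟩
  exact Set.mem_iUnion.2 ⟨i, ⟨j, hjc⟩, rfl⟩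

theorem apply_mem_span_truncX_of_mem_mPart {S : Set ι} {x : TruncPi R c} (hx : x ∈ mPart R c S)
    (i : ι) : x i ∈ Ideal.span {truncX R (c i)} := by
  let L : TruncPi R c →ₗ[R] TruncP R (c i) := LinearMap.proj i
  suffices h : mPart R c S ≤ ((Ideal.span {truncX R (c i)}).restrictScalars R).comap L from
    h hx
  rw [mPart, Submodule.span_le]
  rintro _ ⟨i', -, j, hj, -, rfl⟩
  simp only [SetLike.mem_coe, Submodule.mem_comap, Submodule.restrictScalars_mem, L,
    LinearMap.proj_apply, tpow]
  by_cases h : i = i'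
  · subst h
    rw [Pi.single_eq_same]
    exact Ideal.mem_span_singleton.2 (dvd_pow_self _ (Nat.one_le_iff_ne_zero.1 hj))
  · rw [Pi.single_eq_of_ne h]
    exact zero_mem _

theorem constTerm_apply_eq_zero_of_mem_mPart (hc : ∀ i, 1 ≤ c i) {S : Set ι}
    {x : TruncPi R c} (hx : x ∈ mPart R c S) (i : ι) : constTerm R (c i) (hc i) (x i) = 0 := by
  obtain ⟨y, hy⟩ := Ideal.mem_span_singleton'.1 (apply_mem_span_truncX_of_mem_mPart hx i)
  rw [← hy, map_mul, constTerm_truncX, mul_zero]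

theorem mem_mPart_univ_iff [Fintype ι] (hc : ∀ i, 1 ≤ c i) {x : TruncPi R c} :
    x ∈ mPart R c Set.univ ↔ ∀ i, constTerm R (c i) (hc i) (x i) = 0 := by
  refine ⟨constTerm_apply_eq_zero_of_mem_mPart hc, fun hx => ?_⟩
  rw [← Finset.univ_sum_single x]
  refine Submodule.sum_mem _ fun i _ => ?_
  have hxi := sub_constTerm_smul_one_mem_span (hc i) (x i)
  rw [hx i, zero_smul, sub_zero] at hxi
  have hmap := Submodule.mem_map_of_mem (f := LinearMap.single R (fun i => TruncP R (c i)) i) hxi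
  rw [Submodule.map_span] at hmap
  refine Submodule.span_le.2 ?_ hmap
  rintro _ ⟨z, ⟨j, hj, hjc, rfl⟩, rfl⟩
  exact Submodule.subset_span ⟨i, Set.mem_univ i, j, hj, hjc, rfl⟩

theorem mPart_le_Aplus (hc : ∀ i, 1 ≤ c i) (S : Set ι) :
    mPart R c S ≤ Subalgebra.toSubmodule (Aplus R c hc) := fun _ hx =>
  (mem_Aplus_iff hc).2 fun i j => by
    rw [constTerm_apply_eq_zero_of_mem_mPart hc hx i, constTerm_apply_eq_zero_of_mem_mPart hc hx j]

theorem mPart_pow_le_pi (S : Set ι) (d : ℕ) : mPart R c S ^ d ≤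
    Submodule.pi Set.univ fun i => (Ideal.span {truncX R (c i)} ^ d).restrictScalars R := by
  induction d with
  | zero => simp
  | succ d ih =>
    rw [Submodule.pow_succ, Submodule.mul_le]
    intro a ha b hb
    refine Submodule.mem_pi.2 fun i _ => ?_
    rw [Submodule.restrictScalars_mem, Submodule.pow_succ]
    exact Ideal.mul_mem_mul (Submodule.mem_pi.1 (ih ha) i trivial)
      (apply_mem_span_truncX_of_mem_mPart hb i)

theorem isNilpotent_mPart [Fintype ι] (S : Set ι) : IsNilpotent (mPart R c S) := by
  refine ⟨Finset.univ.sup c, eq_bot_iff.2 fun x hx => funext fun i => ?_⟩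
  have hxi := Submodule.mem_pi.1 (mPart_pow_le_pi S _ hx) i trivial
  have hle : Ideal.span {truncX R (c i)} ^ Finset.univ.sup c ≤ ⊥ :=
    (Ideal.pow_le_pow_right (Finset.le_sup (Finset.mem_univ i))).trans
      (span_truncX_pow_self _).le
  simpa using hle hxi

noncomputable def aplusConstTerm (hc : ∀ i, 1 ≤ c i) (i₀ : ι) : Aplus R c hc →ₐ[R] R :=
  (constTerm R (c i₀) (hc i₀)).comp ((Pi.evalAlgHom R _ i₀).comp (Aplus R c hc).val)

theorem mem_mPart_univ_iff_aplusConstTerm_eq_zero [Fintype ι] (hc : ∀ i, 1 ≤ c i) (i₀ : ι)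
    (x : Aplus R c hc) :
    (x : TruncPi R c) ∈ mPart R c Set.univ ↔ aplusConstTerm hc i₀ x = 0 := by
  rw [mem_mPart_univ_iff hc]
  refine ⟨fun h => h i₀, fun h i => ?_⟩
  rw [(mem_Aplus_iff hc).1 x.2 i i₀]
  exact h

end Monomials

theorem aplus_endo_bijective_iff_cotangent_bijective_general
    {R : Type*} [CommRing R] {m : ℕ} (hm : 1 ≤ m)
    (c : Fin m → ℕ) (hc1 : ∀ i, 1 ≤ c i)
    (φ : ↥(Aplus R c hc1) →ₐ[R] ↥(Aplus R c hc1))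
    (M : Submodule R (TruncPi R c))
    (hM : M = mPart R c Set.univ)
    (hφ : ∀ x : ↥(Aplus R c hc1), (x : TruncPi R c) ∈ M → (φ x : TruncPi R c) ∈ M)
    (Q : Type*) [AddCommGroup Q] [Module R Q]
    (q : ↥M →ₗ[R] Q) (hq_surj : Function.Surjective q)
    (hq_ker : LinearMap.ker q = Submodule.comap M.subtype (M * M))
    (ψ : Q →ₗ[R] Q)
    (hψ : ∀ (x : ↥(Aplus R c hc1)) (hx : (x : TruncPi R c) ∈ M),
      ψ (q ⟨(x : TruncPi R c), hx⟩) = q ⟨(φ x : TruncPi R c), hφ x hx⟩) :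
    Function.Bijective φ ↔ Function.Bijective ψ := by
  subst hM
  have hMA := mPart_le_Aplus (R := R) hc1 Set.univ
  have hε := mem_mPart_univ_iff_aplusConstTerm_eq_zero (R := R) hc1 ⟨0, hm⟩
  have hMfg := mPart_fg (R := R) (c := c) Set.univ
  have : Module.Finite R (mPart R c Set.univ) := Module.Finite.iff_fg.2 hMfg
  have : Module.Finite R Q := Module.Finite.of_surjective q hq_surj
  have : Module.Finite R (Aplus R c hc1) := finite_of_augmentation hMA hε hMfg
  refine ⟨fun h => ?_, fun h => ?_⟩
  · exact OrzechProperty.bijective_of_surjective_endomorphism ψ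
      (surjective_cotangent_of_surjective hMA hε hφ hψ hq_surj h.2)
  · exact OrzechProperty.bijective_of_surjective_endomorphism φ.toLinearMap
      (surjective_of_surjective_cotangent hMA hε (isNilpotent_mPart (R := R) _) hφ hψ hq_surj
        hq_ker h.2)

/-- an `R`-algebra endomorphism of `A⁺` preserving the maximal ideal `𝔪` is
bijective iff the induced `R`-module endomorphism of `𝔪/𝔪²` is bijective.  Here the quotient
`𝔪/𝔪²` is presented as any `R`-module `Q` equipped with a surjection `q : 𝔪 → Q` whose
kernel is `𝔪²`, and `ψ` is the endomorphism of `Q` induced by `φ`. -/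
theorem aplus_endo_bijective_iff_cotangent_bijective
    {R : Type*} [CommRing R] {m : ℕ} (hm : 1 ≤ m)
    (c : Fin m → ℕ) (hc1 : ∀ i, 1 ≤ c i) (hc2 : ∀ i, 2 ≤ c i)
    (φ : ↥(Aplus R c hc1) →ₐ[R] ↥(Aplus R c hc1))
    (M : Submodule R (TruncPi R c))
    (hM : M = mPart R c Set.univ)
    (hφ : ∀ x : ↥(Aplus R c hc1), (x : TruncPi R c) ∈ M → (φ x : TruncPi R c) ∈ M)
    (Q : Type*) [AddCommGroup Q] [Module R Q]
    (q : ↥M →ₗ[R] Q) (hq_surj : Function.Surjective q)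
    (hq_ker : LinearMap.ker q = Submodule.comap M.subtype (M * M))
    (ψ : Q →ₗ[R] Q)
    (hψ : ∀ (x : ↥(Aplus R c hc1)) (hx : (x : TruncPi R c) ∈ M),
      ψ (q ⟨(x : TruncPi R c), hx⟩) = q ⟨(φ x : TruncPi R c), hφ x hx⟩) :
    Function.Bijective φ ↔ Function.Bijective ψ :=
  aplus_endo_bijective_iff_cotangent_bijective_general hm c hc1 φ M hM hφ Q q hq_surj hq_ker ψ hψ
end

section
/- Let g ≥ 0 and m ≥ 1 be integers with 3g > m, and set s = g + m. Define β = 0 if s ≡ 0 (mod 4), β = 1 if s is odd, and β = 4 if s ≡ 2 (mod 4). Then for every integer k ≥ m one has 8·(2k − m − g)·(s − k) ≤ s² − β, and there exists an integer k ≥ m for which equality holds. (Equivalently, the maximum over integers k ≥ m of (2k − m − g)(g + m − k) equals (s² − β)/8.) -/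
/-!
Writing `s = g + m`, the identity `8 (2k - m - g)(s - k) = s² - (4k - 3s)²` turns the problem
into minimising `x²` over `x = 4k - 3s`, which runs through the integers congruent to `s`
modulo `4`. That minimum is `β`, attained by some `x ∈ [-2, 1]`; the corresponding `k = (3s + x)/4`
satisfies `k ≥ m` precisely because `3g > m` (when `x = -2`, `s` is even, so `3g - m = 4g - s ≠ 1`).
-/

theorem eight_mul_mul_eq_sq_sub_sq (g m k : ℤ) :
    8 * ((2 * k - m - g) * (g + m - k)) = (g + m) ^ 2 - (4 * k - 3 * (g + m)) ^ 2 := by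
  ring

theorem le_sq_of_emod_four_eq {s β x : ℤ} (hβ0 : s % 4 = 0 → β = 0) (hβodd : Odd s → β = 1)
    (hβ2 : s % 4 = 2 → β = 4) (hx : x % 4 = s % 4) : β ≤ x ^ 2 := by
  have hs : s % 4 = 0 ∨ Odd s ∨ s % 4 = 2 := by rw [Int.odd_iff]; omega
  rcases hs with hs | hs | hs
  · rw [hβ0 hs]
    positivity
  · rw [hβodd hs, ← one_pow 2, sq_le_sq, abs_one, le_abs]
    rw [Int.odd_iff] at hs
    omega
  · rw [hβ2 hs, show (4 : ℤ) = 2 ^ 2 by norm_num, sq_le_sq, abs_two, le_abs]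
    omega

theorem exists_emod_four_eq_sq_eq {s β : ℤ} (hβ0 : s % 4 = 0 → β = 0) (hβodd : Odd s → β = 1)
    (hβ2 : s % 4 = 2 → β = 4) : ∃ x : ℤ, x % 4 = s % 4 ∧ x ^ 2 = β ∧ -2 ≤ x ∧ x ≤ 1 := by
  have hs : s % 4 = 0 ∨ s % 4 = 1 ∨ s % 4 = 2 ∨ s % 4 = 3 := by omega
  have hodd : s % 4 = 1 ∨ s % 4 = 3 → Odd s := fun h => Int.odd_iff.mpr (by omega)
  rcases hs with hs | hs | hs | hs
  · exact ⟨0, by omega, by simp [hβ0 hs], by norm_num, by norm_num⟩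
  · exact ⟨1, by omega, by simp [hβodd (hodd (.inl hs))], by norm_num, by norm_num⟩
  · exact ⟨-2, by omega, by norm_num [hβ2 hs], by norm_num, by norm_num⟩
  · exact ⟨-1, by omega, by simp [hβodd (hodd (.inr hs))], by norm_num, by norm_num⟩

theorem spine_max_dimension_case_3g_gt_m_general
    (g m s β : ℤ) (h3g : m < 3 * g) (hs : s = g + m)
    (hβ0 : s % 4 = 0 → β = 0)
    (hβodd : Odd s → β = 1)
    (hβ2 : s % 4 = 2 → β = 4) :
    (∀ k : ℤ, m ≤ k → 8 * ((2 * k - m - g) * (s - k)) ≤ s ^ 2 - β) ∧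
    (∃ k : ℤ, m ≤ k ∧ 8 * ((2 * k - m - g) * (s - k)) = s ^ 2 - β) := by
  subst hs
  constructor
  · intro k _
    have hβ := le_sq_of_emod_four_eq hβ0 hβodd hβ2 (x := 4 * k - 3 * (g + m)) (by omega)
    rw [eight_mul_mul_eq_sq_sub_sq]
    linarith
  · obtain ⟨x, hxs, hxβ, hx_lo, hx_hi⟩ := exists_emod_four_eq_sq_eq hβ0 hβodd hβ2
    refine ⟨(3 * (g + m) + x) / 4, by omega, ?_⟩
    rw [eight_mul_mul_eq_sq_sub_sq, show 4 * ((3 * (g + m) + x) / 4) - 3 * (g + m) = x by omega,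
      hxβ]

/-- for `3g > m` and `s = g + m`, the maximum of `(2k - m - g)(s - k)` over
integers `k ≥ m` equals `(s² - β)/8`, where `β = 0, 1, 4` according to
`s ≡ 0 (mod 4)`, `s` odd, `s ≡ 2 (mod 4)` respectively. -/
theorem spine_max_dimension_case_3g_gt_m
    (g m s β : ℤ) (hg : 0 ≤ g) (hm : 1 ≤ m) (h3g : m < 3 * g) (hs : s = g + m)
    (hβ0 : s % 4 = 0 → β = 0)
    (hβodd : Odd s → β = 1)
    (hβ2 : s % 4 = 2 → β = 4) :
    (∀ k : ℤ, m ≤ k → 8 * ((2 * k - m - g) * (s - k)) ≤ s ^ 2 - β) ∧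
    (∃ k : ℤ, m ≤ k ∧ 8 * ((2 * k - m - g) * (s - k)) = s ^ 2 - β) :=
  spine_max_dimension_case_3g_gt_m_general g m s β h3g hs hβ0 hβodd hβ2
end

section
/- Let k be a field and A a finite-dimensional commutative ℤ-graded k-algebra, A = ⊕_{d∈ℤ} A_d with 1 ∈ A₀. For nonzero a ∈ A let in(a) denote the nonzero homogeneous component of a of least degree, and for a k-subalgebra B ⊆ A let in(B) = span_k{in(b) : b ∈ B, b ≠ 0}. Then: (1) in(B) is a k-subalgebra of A (it contains 1 and is closed under multiplication); (2) dim_k in(B) = dim_k B; and (3) for every d ∈ ℤ, dim_k((in(B) ∩ F_d)/(in(B) ∩ F_{d+1})) = dim_k((B ∩ F_d)/(B ∩ F_{d+1})), where F_d = ⊕_{e ≥ d} A_e. -/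
/-!
On `B ∩ F_d` the projection to degree `d` has kernel `B ∩ F_{d+1}` and image `in(B) ∩ A_d`.
Since `in(B)` is spanned by homogeneous elements, the projection does the same on `in(B) ∩ F_d`,
so `B` and `in(B)` have the same graded pieces `(· ∩ F_d) / (· ∩ F_{d+1})`; as the filtration
is finite, exhaustive and separated, the dimensions agree. Multiplicativity holds because
`in(b) in(c)` is either `0` or `in(bc)`.
-/

open DirectSum Module Submodule

theorem Submodule.finrank_map_add_finrank_inf_ker {K V W : Type*} [DivisionRing K]
    [AddCommGroup V] [Module K V] [AddCommGroup W] [Module K W] [FiniteDimensional K V]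
    (f : V →ₗ[K] W) (p : Submodule K V) :
    finrank K (p.map f) + finrank K ↥(p ⊓ LinearMap.ker f) = finrank K p := by
  rw [← LinearMap.range_domRestrict, ← Submodule.map_comap_subtype,
    Submodule.finrank_map_subtype_eq, ← LinearMap.ker_domRestrict]
  exact LinearMap.finrank_range_add_finrank_ker _

namespace GradedAlgebra

section filtration

variable {R A : Type*} [CommRing R] [Ring A] [Algebra R A] (𝒜 : ℤ → Submodule R A)

def filtration (d : ℤ) : Submodule R A := ⨆ e : ℤ, ⨆ _ : d ≤ e, 𝒜 e

variable {𝒜}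

theorem le_filtration {d e : ℤ} (h : d ≤ e) : 𝒜 e ≤ filtration 𝒜 d :=
  le_iSup₂ (f := fun e _ => 𝒜 e) e h

theorem filtration_antitone : Antitone (filtration 𝒜) := fun _ _ h =>
  iSup₂_le fun _ he => le_filtration (h.trans he)

theorem filtration_mul_le [SetLike.GradedMonoid 𝒜] (d e : ℤ) :
    filtration 𝒜 d * filtration 𝒜 e ≤ filtration 𝒜 (d + e) := by
  simp only [filtration, iSup_mul, mul_iSup, iSup_le_iff]
  intro j hj i hi
  exact mul_le.mpr fun x hx y hy =>
    le_filtration (add_le_add hi hj) (SetLike.mul_mem_graded hx hy)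

theorem mul_mem_filtration [SetLike.GradedMonoid 𝒜] {d e : ℤ} {a b : A}
    (ha : a ∈ filtration 𝒜 d) (hb : b ∈ filtration 𝒜 e) : a * b ∈ filtration 𝒜 (d + e) :=
  filtration_mul_le d e (mul_mem_mul ha hb)

theorem mem_filtration_of_sub_mem {d : ℤ} {a x : A} (hx : x ∈ 𝒜 d)
    (hax : a - x ∈ filtration 𝒜 (d + 1)) : a ∈ filtration 𝒜 d := by
  simpa using add_mem (le_filtration le_rfl hx) (filtration_antitone (by omega) hax)

variable [GradedAlgebra 𝒜]

theorem proj_mem (d : ℤ) (a : A) : proj 𝒜 d a ∈ 𝒜 d := (decompose 𝒜 a d).2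

theorem proj_of_mem {d : ℤ} {x : A} (hx : x ∈ 𝒜 d) : proj 𝒜 d x = x := by
  rw [proj_apply, decompose_of_mem_same 𝒜 hx]

theorem proj_of_mem_of_ne {d e : ℤ} {x : A} (hx : x ∈ 𝒜 e) (h : e ≠ d) : proj 𝒜 d x = 0 := by
  rw [proj_apply, decompose_of_mem_ne 𝒜 hx h]

theorem proj_proj (d : ℤ) (a : A) : proj 𝒜 d (proj 𝒜 d a) = proj 𝒜 d a :=
  proj_of_mem (proj_mem d a)

theorem mem_filtration_iff {d : ℤ} {a : A} :
    a ∈ filtration 𝒜 d ↔ ∀ e < d, proj 𝒜 e a = 0 := by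
  classical
  refine ⟨fun ha e he => ?_, fun h => ?_⟩
  · have : filtration 𝒜 d ≤ LinearMap.ker (proj 𝒜 e) :=
      iSup₂_le fun e' he' x hx => proj_of_mem_of_ne hx (by omega)
    exact this ha
  · rw [← sum_support_decompose 𝒜 a]
    refine sum_mem fun e he => ?_
    rcases lt_or_ge e d with hed | hde
    · exact absurd (Subtype.ext (h e hed) : decompose 𝒜 a e = 0)
        (DFinsupp.mem_support_iff.mp he)
    · exact le_filtration hde (decompose 𝒜 a e).2

theorem ker_proj_inf_filtration (d : ℤ) :
    LinearMap.ker (proj 𝒜 d) ⊓ filtration 𝒜 d = filtration 𝒜 (d + 1) := by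
  ext a
  simp only [mem_inf, LinearMap.mem_ker, mem_filtration_iff]
  refine ⟨fun ⟨had, ha⟩ e he => ?_, fun ha => ⟨ha d (by omega), fun e he => ha e (by omega)⟩⟩
  rcases (Int.lt_add_one_iff.mp he).eq_or_lt with rfl | he
  exacts [had, ha e he]

theorem sub_proj_mem_filtration_succ {d : ℤ} {a : A} (ha : a ∈ filtration 𝒜 d) :
    a - proj 𝒜 d a ∈ filtration 𝒜 (d + 1) := by
  rw [← ker_proj_inf_filtration]
  exact ⟨LinearMap.mem_ker.mpr (by rw [map_sub, proj_proj, sub_self]),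
    sub_mem ha (le_filtration le_rfl (proj_mem d a))⟩

theorem proj_eq_of_sub_mem {d : ℤ} {a x : A} (hx : x ∈ 𝒜 d)
    (hax : a - x ∈ filtration 𝒜 (d + 1)) : proj 𝒜 d a = x := by
  have : proj 𝒜 d (a - x) = 0 := by
    rw [← ker_proj_inf_filtration] at hax
    exact hax.1
  rwa [map_sub, proj_of_mem hx, sub_eq_zero] at this

theorem exists_filtration_eq_top_and_eq_bot [IsNoetherian R A] :
    ∃ m n : ℤ, filtration 𝒜 m = ⊤ ∧ filtration 𝒜 n = ⊥ := by
  obtain ⟨m, hm⟩ := (finite_ne_bot_of_iSupIndep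
    (Decomposition.isInternal 𝒜).submodule_iSupIndep).bddBelow
  obtain ⟨n, hn⟩ := (finite_ne_bot_of_iSupIndep
    (Decomposition.isInternal 𝒜).submodule_iSupIndep).bddAbove
  refine ⟨m, n + 1, ?_, ?_⟩
  · rw [eq_top_iff, ← (Decomposition.isInternal 𝒜).submodule_iSup_eq_top]
    refine iSup_le fun e => ?_
    by_cases he : 𝒜 e = ⊥
    · simp [he]
    · exact le_filtration (hm he)
  · refine eq_bot_iff.mpr (iSup₂_le fun e he => ?_)
    by_contra h
    have := hn (show 𝒜 e ≠ ⊥ from fun h' => h (h' ▸ le_rfl))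
    omega

end filtration

section initialSpan

variable {R A : Type*} [CommRing R] [Ring A] [Algebra R A] (𝒜 : ℤ → Submodule R A)

/-- The span of the initial forms of the elements of `W`: for `0 ≠ x ∈ A_d`, the condition
`b - x ∈ F_{d+1}` says that `x` is the lowest-degree homogeneous component of `b`. -/
def initialSpan (W : Submodule R A) : Submodule R A :=
  span R {x | ∃ b ∈ W, ∃ d : ℤ, x ∈ 𝒜 d ∧ x ≠ 0 ∧ b - x ∈ filtration 𝒜 (d + 1)}

variable {𝒜} {W : Submodule R A}

theorem one_mem_initialSpan [SetLike.GradedOne 𝒜] (h : 1 ∈ W) : 1 ∈ initialSpan 𝒜 W := by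
  by_cases h1 : (1 : A) = 0
  · exact h1 ▸ zero_mem _
  · exact subset_span ⟨1, h, 0, SetLike.one_mem_graded 𝒜, h1, by simp⟩

theorem mul_sub_mul_mem_filtration [SetLike.GradedMonoid 𝒜] {d e : ℤ} {a b x y : A}
    (hx : x ∈ 𝒜 d) (hax : a - x ∈ filtration 𝒜 (d + 1))
    (hy : y ∈ 𝒜 e) (hby : b - y ∈ filtration 𝒜 (e + 1)) :
    a * b - x * y ∈ filtration 𝒜 (d + e + 1) := by
  rw [show a * b - x * y = a * (b - y) + (a - x) * y by noncomm_ring]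
  refine add_mem ?_ ?_
  · rw [add_assoc]
    exact mul_mem_filtration (mem_filtration_of_sub_mem hx hax) hby
  · rw [add_right_comm]
    exact mul_mem_filtration hax (le_filtration le_rfl hy)

theorem initialSpan_mul_le [SetLike.GradedMonoid 𝒜] (h : W * W ≤ W) :
    initialSpan 𝒜 W * initialSpan 𝒜 W ≤ initialSpan 𝒜 W := by
  rw [initialSpan, span_mul_span, span_le]
  rintro _ ⟨x, ⟨a, ha, d, hx, -, hax⟩, y, ⟨b, hb, e, hy, -, hby⟩, rfl⟩
  change x * y ∈ span R _
  by_cases hxy : x * y = 0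
  · rw [hxy]
    exact zero_mem _
  · exact subset_span ⟨a * b, h (mul_mem_mul ha hb), d + e, SetLike.mul_mem_graded hx hy, hxy,
      mul_sub_mul_mem_filtration hx hax hy hby⟩

variable [GradedAlgebra 𝒜]

theorem proj_mem_initialSpan {d : ℤ} {b : A} (hb : b ∈ W ⊓ filtration 𝒜 d) :
    proj 𝒜 d b ∈ initialSpan 𝒜 W := by
  by_cases h0 : proj 𝒜 d b = 0
  · rw [h0]
    exact zero_mem _
  · exact subset_span ⟨b, hb.1, d, proj_mem d b, h0, sub_proj_mem_filtration_succ hb.2⟩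

theorem map_proj_initialSpan_le (d : ℤ) :
    (initialSpan 𝒜 W).map (proj 𝒜 d) ≤ (W ⊓ filtration 𝒜 d).map (proj 𝒜 d) := by
  rw [initialSpan, map_span, span_le]
  rintro _ ⟨x, ⟨b, hb, e, hx, -, hbx⟩, rfl⟩
  rcases eq_or_ne e d with rfl | hed
  · exact ⟨b, ⟨hb, mem_filtration_of_sub_mem hx hbx⟩, by
      rw [proj_eq_of_sub_mem hx hbx, proj_of_mem hx]⟩
  · rw [SetLike.mem_coe, proj_of_mem_of_ne hx hed]
    exact zero_mem _

theorem map_proj_initialSpan_inf_filtration (d : ℤ) :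
    (initialSpan 𝒜 W ⊓ filtration 𝒜 d).map (proj 𝒜 d)
      = (W ⊓ filtration 𝒜 d).map (proj 𝒜 d) := by
  refine le_antisymm ((map_mono inf_le_left).trans (map_proj_initialSpan_le d)) ?_
  rintro _ ⟨b, hb, rfl⟩
  exact ⟨proj 𝒜 d b, ⟨proj_mem_initialSpan hb, le_filtration le_rfl (proj_mem d b)⟩,
    proj_proj d b⟩

end initialSpan

section finrank

variable {k A : Type*} [Field k] [Ring A] [Algebra k A] [FiniteDimensional k A]
  {𝒜 : ℤ → Submodule k A} [GradedAlgebra 𝒜]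

theorem finrank_map_proj_add_finrank_inf_filtration_succ (W : Submodule k A) (d : ℤ) :
    finrank k ((W ⊓ filtration 𝒜 d).map (proj 𝒜 d)) + finrank k ↥(W ⊓ filtration 𝒜 (d + 1))
      = finrank k ↥(W ⊓ filtration 𝒜 d) := by
  rw [← ker_proj_inf_filtration, inf_comm (LinearMap.ker _), ← inf_assoc]
  exact finrank_map_add_finrank_inf_ker _ _

theorem finrank_initialSpan_inf_filtration_add (W : Submodule k A) (d : ℤ) :
    finrank k ↥(initialSpan 𝒜 W ⊓ filtration 𝒜 d) + finrank k ↥(W ⊓ filtration 𝒜 (d + 1))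
      = finrank k ↥(W ⊓ filtration 𝒜 d)
        + finrank k ↥(initialSpan 𝒜 W ⊓ filtration 𝒜 (d + 1)) := by
  rw [← finrank_map_proj_add_finrank_inf_filtration_succ W d,
    ← finrank_map_proj_add_finrank_inf_filtration_succ (initialSpan 𝒜 W) d,
    map_proj_initialSpan_inf_filtration]
  omega

theorem finrank_eq_of_finrank_inf_filtration_add (V W : Submodule k A)
    (h : ∀ d, finrank k ↥(V ⊓ filtration 𝒜 d) + finrank k ↥(W ⊓ filtration 𝒜 (d + 1))
      = finrank k ↥(W ⊓ filtration 𝒜 d) + finrank k ↥(V ⊓ filtration 𝒜 (d + 1))) :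
    finrank k V = finrank k W := by
  obtain ⟨m, n, hm, hn⟩ := exists_filtration_eq_top_and_eq_bot (𝒜 := 𝒜)
  have key : ∀ d ≤ n, finrank k ↥(V ⊓ filtration 𝒜 d) = finrank k ↥(W ⊓ filtration 𝒜 d) := by
    intro d hd
    induction d, hd using Int.leInductionDown with
    | base => rw [hn, inf_bot_eq, inf_bot_eq]
    | pred d _ ih =>
      have := h (d - 1)
      rw [sub_add_cancel] at this
      omega
  have htop : filtration 𝒜 (min m n) = ⊤ :=
    top_le_iff.mp (hm ▸ filtration_antitone (min_le_left m n))
  have := key (min m n) (min_le_right m n)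
  rwa [htop, inf_top_eq, inf_top_eq] at this

end finrank

end GradedAlgebra

/-- for a finite-dimensional commutative ℤ-graded `k`-algebra `A` and a
subalgebra `B ⊆ A`, the span `in(B)` of the lowest-degree homogeneous components of the
nonzero elements of `B` is a subalgebra of the same dimension as `B`, with the same
vanishing sequence with respect to the filtration `F_d = ⊕_{e ≥ d} A_e` (the latter stated
as the equality of rank differences `dim(W ∩ F_d) - dim(W ∩ F_{d+1})` for `W = in(B), B`). -/
theorem initial_subalgebra_graded
    {k A : Type*} [Field k] [CommRing A] [Algebra k A] [FiniteDimensional k A]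
    (𝒜 : ℤ → Submodule k A) [GradedAlgebra 𝒜] (B : Subalgebra k A) :
    let Fil : ℤ → Submodule k A := fun d => ⨆ e : ℤ, ⨆ _ : d ≤ e, 𝒜 e
    let inB : Submodule k A := Submodule.span k
      {x | ∃ b ∈ B, ∃ d : ℤ, x ∈ 𝒜 d ∧ x ≠ 0 ∧ b - x ∈ Fil (d + 1)}
    ((1 : A) ∈ inB ∧ ∀ x ∈ inB, ∀ y ∈ inB, x * y ∈ inB) ∧
    Module.finrank k ↥inB = Module.finrank k ↥B ∧
    (∀ d : ℤ,
      Module.finrank k ↥(inB ⊓ Fil d)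
          + Module.finrank k ↥(Subalgebra.toSubmodule B ⊓ Fil (d + 1))
        = Module.finrank k ↥(Subalgebra.toSubmodule B ⊓ Fil d)
          + Module.finrank k ↥(inB ⊓ Fil (d + 1))) := by
  intro Fil inB
  have hFil : Fil = GradedAlgebra.filtration 𝒜 := rfl
  have hinB : inB = GradedAlgebra.initialSpan 𝒜 (Subalgebra.toSubmodule B) := rfl
  clear_value Fil inB
  subst hFil hinB
  have hstep :=
    GradedAlgebra.finrank_initialSpan_inf_filtration_add (𝒜 := 𝒜) (Subalgebra.toSubmodule B)
  exact ⟨⟨GradedAlgebra.one_mem_initialSpan B.one_mem, fun x hx y hy =>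
      GradedAlgebra.initialSpan_mul_le (Subalgebra.isIdempotentElem_toSubmodule B).le
        (mul_mem_mul hx hy)⟩,
    GradedAlgebra.finrank_eq_of_finrank_inf_filtration_add _ _ hstep, hstep⟩
end
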